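/- arXiv:2604.22256 — 2 statements merged into one kernel-verified Lean document; each statement's English description precedes it below -/
import Mathlib

section
/- Let Σ be a type and let ô, π₁, π₂ be lists over Σ such that ô is a prefix of π₁, ô is a prefix of π₂, and |π₁| < |π₂|. Define, for any list π, P(ô | π) = ∑_{t=0}^{|π|} (1/(|π|+1)) · 1[ô = take(t, π)] (the full-observability observation likelihood with uniform progress prior). Then P(ô | π₁) > P(ô | π₂); that is, when two plans both perfectly explain the observations under full observability, the shorter plan receives strictly higher observation likelihood. -/
lemma sum_indicator_prefix {S : Type*} [DecidableEq S] (oHat pi : List S)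
    (h : oHat <+: pi) :
    (∑ t ∈ Finset.range (pi.length + 1),
        ((if oHat = pi.take t then 1 else 0) : ℝ)) = 1 := by
  rw [Finset.sum_eq_single oHat.length]
  · rw [if_pos (List.prefix_iff_eq_take.mp h)]
  · intro t ht hne
    rw [Finset.mem_range] at ht
    rw [if_neg]
    intro hEq
    apply hne
    have hl : oHat.length = min t pi.length := by
      simpa using congrArg List.length hEq
    omega
  · intro hmem
    exfalso
    apply hmem
    simp
    have := h.length_le
    omega

/-- **Shorter plans receive higher observation likelihood.** Under full
observability with the uniform progress prior,
`P(ô | π) = ∑_{t=0}^{|π|} (1/(|π|+1)) · 1[ô = take(t, π)]`; if `ô` is a prefix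
of both `π₁` and `π₂` and `|π₁| < |π₂|`, then `P(ô | π₁) > P(ô | π₂)`. -/
theorem shorter_plan_higher_likelihood {S : Type*} [DecidableEq S]
    (oHat pi1 pi2 : List S) (h1 : oHat <+: pi1) (h2 : oHat <+: pi2)
    (hlen : pi1.length < pi2.length) :
    (∑ t ∈ Finset.range (pi2.length + 1),
        (1 / ((pi2.length : ℝ) + 1)) * (if oHat = pi2.take t then 1 else 0)) <
      (∑ t ∈ Finset.range (pi1.length + 1),
        (1 / ((pi1.length : ℝ) + 1)) * (if oHat = pi1.take t then 1 else 0)) := by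
  rw [← Finset.mul_sum, ← Finset.mul_sum, sum_indicator_prefix _ _ h1,
    sum_indicator_prefix _ _ h2, mul_one, mul_one]
  apply one_div_lt_one_div_of_lt
  · positivity
  · exact_mod_cast by omega
end

section
/- Fix a finite type F of atoms with decidable equality; a state is a finset s ⊆ F; a STRIPS operator σ is a triple (pre σ, add σ, del σ) of finsets of F; σ is applicable in s iff pre σ ⊆ s, yielding γ(s, σ) = (s \ del σ) ∪ add σ. Let T be a finite type of task identifiers with decidable equality, α : T → operators a labeling, and ≺ a strict (irreflexive, transitive) order on T. For a list ℓ over T with |ℓ| = |T| and an initial state s₀, define the state sequence s_t = γ(s_{t−1}, α(ℓ_t)), let R_t be the set of identifiers of T not among the first t−1 entries of ℓ, and let A_t = { u ∈ R_t : there is no u' ∈ R_t with u' ≺ u, and pre(α(u)) ⊆ s_{t−1} }. Define the linearization probability P(ℓ | s₀) = ∏_{t=1}^{|ℓ|} ( 1[ℓ_t ∈ A_t] / |A_t| ). Then P(ℓ | s₀) > 0 if and only if ℓ is an executable linearization of the network from s₀, i.e., ℓ is duplicate-free and enumerates all of T, whenever u ≺ v the entry u occurs before v in ℓ, and for every t the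 operator α(ℓ_t) is applicable in s_{t−1}. -/
/-- A STRIPS operator over a type `F` of atoms: precondition, add and delete
lists (finsets of atoms). -/
structure StripsOp (F : Type*) where
  pre : Finset F
  add : Finset F
  del : Finset F

/-- Applying an operator to a state: `γ(s, σ) = (s \ del σ) ∪ add σ`. -/
def applyOp {F : Type*} [DecidableEq F] (s : Finset F) (σ : StripsOp F) :
    Finset F :=
  (s \ σ.del) ∪ σ.add

/-- The state after executing the first `t` entries of `ℓ` from `s₀`. -/
def stateAfter {F T : Type*} [DecidableEq F] (α : T → StripsOp F)
    (s₀ : Finset F) (ℓ : List T) (t : ℕ) : Finset F :=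
  (ℓ.take t).foldl (fun s u => applyOp s (α u)) s₀

/-- The available set `A_{t+1}`: tasks not among the first `t` entries of `ℓ`,
with no remaining `≺`-predecessor, whose operator is applicable in the current
state. -/
def availSet {F T : Type*} [DecidableEq F] [Fintype T] [DecidableEq T]
    (α : T → StripsOp F) (prec : T → T → Prop) [DecidableRel prec]
    (s₀ : Finset F) (ℓ : List T) (t : ℕ) : Finset T :=
  (Finset.univ \ (ℓ.take t).toFinset).filter
    (fun u => (∀ u' ∈ Finset.univ \ (ℓ.take t).toFinset, ¬ prec u' u) ∧
      (α u).pre ⊆ stateAfter α s₀ ℓ t)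

/-- The Stage II linearization probability
`P(ℓ | s₀) = ∏_t 1[ℓ_t ∈ A_t] / |A_t|`. -/
noncomputable def linProb {F T : Type*} [DecidableEq F] [Fintype T]
    [DecidableEq T] (α : T → StripsOp F) (prec : T → T → Prop)
    [DecidableRel prec] (s₀ : Finset F) (ℓ : List T) : ℝ :=
  ∏ t : Fin ℓ.length,
    (if ℓ.get t ∈ availSet α prec s₀ ℓ t then (1 : ℝ) else 0) /
      ((availSet α prec s₀ ℓ t).card : ℝ)

private lemma get_mem_take_iff_of_nodup {T : Type*} {l : List T}
    (hnd : l.Nodup) (i : Fin l.length) (t : ℕ) :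
    l.get i ∈ l.take t ↔ (i : ℕ) < t := by
  constructor
  · intro h
    obtain ⟨j, hj, hEq⟩ := List.mem_iff_getElem.mp h
    have hj' : j < t ∧ j < l.length := by
      simpa [List.length_take, Nat.lt_min] using hj
    rw [List.getElem_take] at hEq
    have h2 : (⟨j, hj'.2⟩ : Fin l.length) = i := hnd.get_inj_iff.mp hEq
    have h3 : j = (i : ℕ) := by simpa using congrArg Fin.val h2
    omega
  · intro h
    refine List.mem_iff_getElem.mpr ⟨(i : ℕ), ?_, ?_⟩
    · simp [List.length_take, Nat.lt_min, h, i.isLt]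
    · rw [List.getElem_take]
      rfl

/-- **Stage II support characterization.** For a primitive task network
`⟨T, α, ≺⟩` with `≺` a strict (irreflexive, transitive) order, and a list `ℓ`
over `T` with `|ℓ| = |T|`, the linearization probability is positive iff `ℓ`
is an executable linearization from `s₀`: it is duplicate-free and enumerates
all of `T`, respects `≺` (whenever `u ≺ v`, `u` occurs before `v`), and every
operator is applicable in the state in which it is executed. -/
theorem linProb_pos_iff_executable_linearization {F T : Type*} [DecidableEq F]
    [Fintype T] [DecidableEq T] (α : T → StripsOp F) (prec : T → T → Prop)
    [DecidableRel prec]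
    (hirr : ∀ u, ¬ prec u u)
    (htrans : ∀ u v w, prec u v → prec v w → prec u w)
    (s₀ : Finset F) (ℓ : List T) (hlen : ℓ.length = Fintype.card T) :
    0 < linProb α prec s₀ ℓ ↔
      (ℓ.Nodup ∧ (∀ u : T, u ∈ ℓ) ∧
        (∀ i j : Fin ℓ.length, prec (ℓ.get i) (ℓ.get j) → (i : ℕ) < j) ∧
        (∀ t : Fin ℓ.length, (α (ℓ.get t)).pre ⊆ stateAfter α s₀ ℓ t)) := by
  have key : 0 < linProb α prec s₀ ℓ ↔
      ∀ t : Fin ℓ.length, ℓ.get t ∈ availSet α prec s₀ ℓ t := by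
    unfold linProb
    constructor
    · intro h t
      by_contra hmem
      rw [Finset.prod_eq_zero (Finset.mem_univ t)
        (by rw [if_neg hmem]; simp)] at h
      exact lt_irrefl 0 h
    · intro h
      apply Finset.prod_pos
      intro t _
      have hmem := h t
      have hcard : 0 < (availSet α prec s₀ ℓ t).card :=
        Finset.card_pos.mpr ⟨_, hmem⟩
      rw [if_pos hmem]
      exact div_pos one_pos (by exact_mod_cast hcard)
  rw [key]
  constructor
  · intro h
    have hmem : ∀ t : Fin ℓ.length, ℓ.get t ∉ (ℓ.take (t : ℕ)).toFinset ∧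
        (∀ u' ∈ Finset.univ \ (ℓ.take (t : ℕ)).toFinset, ¬ prec u' (ℓ.get t)) ∧
        (α (ℓ.get t)).pre ⊆ stateAfter α s₀ ℓ t := by
      intro t
      have := h t
      simpa [availSet, Finset.mem_filter, Finset.mem_sdiff] using this
    have aux : ∀ i j : Fin ℓ.length, (i : ℕ) < (j : ℕ) → ℓ.get i ≠ ℓ.get j := by
      intro i j hlt hEq
      apply (hmem j).1
      rw [List.mem_toFinset, ← hEq]
      refine List.mem_iff_getElem.mpr ⟨(i : ℕ), ?_, ?_⟩
      · simp [List.length_take, Nat.lt_min, hlt, i.isLt]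
      · rw [List.getElem_take]; rfl
    have hnd : ℓ.Nodup := by
      rw [List.nodup_iff_injective_get]
      intro i j hij
      by_contra hne
      have hne' : (i : ℕ) ≠ (j : ℕ) := fun hc => hne (Fin.ext hc)
      rcases Nat.lt_or_ge (i : ℕ) (j : ℕ) with hlt | hge
      · exact aux i j hlt hij
      · exact aux j i (by omega) hij.symm
    refine ⟨hnd, ?_, ?_, fun t => (hmem t).2.2⟩
    · intro u
      have hcard : ℓ.toFinset.card = Fintype.card T := by
        rw [List.toFinset_card_of_nodup hnd, hlen]
      have huniv : ℓ.toFinset = Finset.univ := Finset.eq_univ_of_card _ hcard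
      rw [← List.mem_toFinset, huniv]
      exact Finset.mem_univ u
    · intro i j hp
      by_contra hle
      push_neg at hle
      have hne : (i : ℕ) ≠ (j : ℕ) := by
        intro hc
        exact hirr _ (by rw [Fin.ext hc] at hp; exact hp)
      have hji : (j : ℕ) < (i : ℕ) := by omega
      refine (hmem j).2.1 (ℓ.get i) ?_ hp
      rw [Finset.mem_sdiff]
      refine ⟨Finset.mem_univ _, ?_⟩
      rw [List.mem_toFinset]
      intro hc
      have := (get_mem_take_iff_of_nodup hnd i (j : ℕ)).mp hc
      omega
  · rintro ⟨hnd, hall, horder, happ⟩ t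
    simp only [availSet, Finset.mem_filter, Finset.mem_sdiff, Finset.mem_univ,
      true_and, List.mem_toFinset]
    refine ⟨?_, ?_, happ t⟩
    · intro hc
      have := (get_mem_take_iff_of_nodup hnd t (t : ℕ)).mp hc
      omega
    · intro u' hu' hp
      obtain ⟨j, hj, hEq⟩ := List.mem_iff_getElem.mp (hall u')
      have hu'' : u' ∉ ℓ.take (t : ℕ) := hu'
      have hjt : ¬ ((j : ℕ) < (t : ℕ)) := by
        intro hc
        apply hu''
        rw [← hEq]
        exact (get_mem_take_iff_of_nodup hnd ⟨j, hj⟩ (t : ℕ)).mpr hc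
      have hlt := horder ⟨j, hj⟩ t (by rw [← hEq] at hp; exact hp)
      simp only [Fin.val_mk] at hlt
      omega
end
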